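/- Let A be a weighted automaton over V and X ∈ V. Then for every valuation σ : V → ℕ, ⟦A^{X--}⟧ σ = ⟦A⟧ (σ[X ↦ σ X + 1]) + (if σ X = 0 then ⟦A⟧ σ else 0); that is, the decrement construction implements truncated decrement of X on the encoded distribution. -/

import Mathlib

open scoped ENNReal
open Classical

/-- Weighted automata over a commutative alphabet `V` with weights in `ℝ≥0∞`. -/
structure WA (V : Type) where
  Q : Type
  [fin : Fintype Q]
  [dec : DecidableEq Q]
  w : Q → Q → ℝ≥0∞
  lab : Q → Q → Option V
  I : Q → ℝ≥0∞
  F : Q → ℝ≥0∞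

attribute [instance] WA.fin WA.dec

variable {V : Type} [Fintype V] [DecidableEq V]

/-- Weight of a path of length `n`. -/
noncomputable def WA.pathWeight (A : WA V) {n : ℕ} (p : Fin (n + 1) → A.Q) : ℝ≥0∞ :=
  A.I (p 0) * (∏ i : Fin n, A.w (p i.castSucc) (p i.succ)) * A.F (p (Fin.last n))

/-- Parikh image of a path: the number of `X`-labeled transitions, for each `X : V`. -/
def WA.parikh (A : WA V) {n : ℕ} (p : Fin (n + 1) → A.Q) : V → ℕ := fun X =>
  (Finset.univ.filter fun i : Fin n => A.lab (p i.castSucc) (p i.succ) = some X).card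

/-- Behavior of a weighted automaton, as a map from valuations to `ℝ≥0∞`. -/
noncomputable def WA.behavior (A : WA V) (σ : V → ℕ) : ℝ≥0∞ :=
  ∑' (n : ℕ) (p : {p : Fin (n + 1) → A.Q // A.parikh p = σ}), A.pathWeight p.1

/-- Total mass of a weighted automaton. -/
noncomputable def WA.mass (A : WA V) : ℝ≥0∞ :=
  ∑' σ : V → ℕ, A.behavior σ

/-- Number of transitions with nonzero weight. -/
noncomputable def WA.size (A : WA V) : ℕ :=
  Nat.card {qr : A.Q × A.Q // A.w qr.1 qr.2 ≠ 0}

/-- Deterministic finite automata over alphabet `V` with a finite state type. -/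
structure DFA' (V : Type) where
  S : Type
  [fin : Fintype S]
  [dec : DecidableEq S]
  step : S → V → S
  start : S
  accept : Finset S

attribute [instance] DFA'.fin DFA'.dec

def DFA'.Accepts (B : DFA' V) (w : List V) : Prop :=
  w.foldl B.step B.start ∈ B.accept

/-- The language of `B` is closed under permutations of letters. -/
def DFA'.PermClosed (B : DFA' V) : Prop :=
  ∀ w₁ w₂ : List V, w₁.Perm w₂ → (B.Accepts w₁ ↔ B.Accepts w₂)

/-- Parikh image of a word. -/
def parikhWord (w : List V) : V → ℕ := fun X => w.count X

/-- Product of a weighted automaton with a DFA. -/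
noncomputable def WA.prodDFA (A : WA V) (B : DFA' V) : WA V where
  Q := A.Q × B.S
  w := fun a b =>
    match A.lab a.1 b.1 with
    | some X => if b.2 = B.step a.2 X then A.w a.1 b.1 else 0
    | none => if b.2 = a.2 then A.w a.1 b.1 else 0
  lab := fun a b => A.lab a.1 b.1
  I := fun a => if a.2 = B.start then A.I a.1 else 0
  F := fun a => if a.2 ∈ B.accept then A.F a.1 else 0

/-- `A[X/1]`: relabel every `X`-transition to an `ε`-transition. -/
def WA.subst1 (A : WA V) (X : V) : WA V :=
  { A with lab := fun q r => if A.lab q r = some X then none else A.lab q r }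

/-- `A[X/0]`: set the weight of every `X`-labeled transition to `0`. -/
def WA.subst0 (A : WA V) (X : V) : WA V :=
  { A with w := fun q r => if A.lab q r = some X then 0 else A.w q r }

/-- Weighted disjoint union `A₁ ⊕_{p,q} A₂`. -/
noncomputable def WA.wsum (p q : ℝ≥0∞) (A₁ A₂ : WA V) : WA V where
  Q := A₁.Q ⊕ A₂.Q
  w := fun a b =>
    match a, b with
    | .inl q, .inl r => A₁.w q r
    | .inr q, .inr r => A₂.w q r
    | _, _ => 0
  lab := fun a b =>
    match a, b with
    | .inl q, .inl r => A₁.lab q r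
    | .inr q, .inr r => A₂.lab q r
    | _, _ => none
  I := Sum.elim (fun s => p * A₁.I s) (fun s => q * A₂.I s)
  F := Sum.elim A₁.F A₂.F

/-- Concatenation `A₁ • A₂`. -/
noncomputable def WA.concat (A₁ A₂ : WA V) : WA V where
  Q := A₁.Q ⊕ A₂.Q
  w := fun a b =>
    match a, b with
    | .inl q, .inl r => A₁.w q r
    | .inr s, .inr t => A₂.w s t
    | .inl q, .inr s => A₁.F q * A₂.I s
    | .inr _, .inl _ => 0
  lab := fun a b =>
    match a, b with
    | .inl q, .inl r => A₁.lab q r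
    | .inr s, .inr t => A₂.lab s t
    | _, _ => none
  I := Sum.elim A₁.I (fun _ => 0)
  F := Sum.elim (fun _ => 0) A₂.F

/-- Transition substitution `A₁[Y/A₂]`. -/
noncomputable def WA.tsubst (A₁ : WA V) (Y : V) (A₂ : WA V) : WA V where
  Q := A₁.Q ⊕ (A₁.Q × A₁.Q × A₂.Q)
  w := fun a b =>
    match a, b with
    | .inl q, .inl r => if A₁.lab q r = some Y then 0 else A₁.w q r
    | .inl q, .inr (q', r, s) =>
        if q' = q ∧ A₁.lab q r = some Y then A₁.w q r * A₂.I s else 0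
    | .inr (q, r, s), .inr (q', r', t) =>
        if q' = q ∧ r' = r then A₂.w s t else 0
    | .inr (q, r, s), .inl r' =>
        if r' = r ∧ A₁.lab q r = some Y then A₂.F s else 0
  lab := fun a b =>
    match a, b with
    | .inl q, .inl r => A₁.lab q r
    | .inr (_, _, s), .inr (_, _, t) => A₂.lab s t
    | _, _ => none
  I := Sum.elim A₁.I (fun _ => 0)
  F := Sum.elim A₁.F (fun _ => 0)

/-- The guard DFA `B_{X>0}`. -/
def BXpos (X : V) : DFA' V where
  S := Bool
  step := fun s a => if a = X then true else s
  start := false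
  accept := {true}

/-- The decrement automaton `A^{X--}`. -/
noncomputable def WA.decrA (A : WA V) (X : V) : WA V :=
  let P := A.prodDFA (BXpos X)
  WA.wsum 1 1
    { P with
      lab := fun a b =>
        if a.2 = false ∧ b.2 = true ∧ P.lab a b = some X then none else P.lab a b }
    (A.subst0 X)

/-- Convolution of two maps `(V → ℕ) → ℝ≥0∞`. -/
noncomputable def conv (f g : (V → ℕ) → ℝ≥0∞) : (V → ℕ) → ℝ≥0∞ := fun σ =>
  ∑' p : {p : (V → ℕ) × (V → ℕ) // p.1 + p.2 = σ}, f p.1.1 * g p.1.2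

/-- Indicator (Dirac) function of a valuation. -/
noncomputable def delta (τ : V → ℕ) : (V → ℕ) → ℝ≥0∞ := fun σ => if σ = τ then 1 else 0

/-- `k`-fold convolution power. -/
noncomputable def convPow (g : (V → ℕ) → ℝ≥0∞) : ℕ → ((V → ℕ) → ℝ≥0∞)
  | 0 => delta 0
  | k + 1 => conv (convPow g k) g

/-- Rectangular guards over `V`. -/
inductive Guard (V : Type) : Type where
  | lt : V → ℕ → Guard V
  | mod : V → (n m : ℕ) → n < m → Guard V
  | and : Guard V → Guard V → Guard V
  | not : Guard V → Guard V

/-- Satisfaction of a guard by a valuation. -/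
def Guard.sat : Guard V → (V → ℕ) → Prop
  | .lt X n, σ => σ X < n
  | .mod X n m _, σ => σ X % m = n
  | .and g₁ g₂, σ => g₁.sat σ ∧ g₂.sat σ
  | .not g, σ => ¬g.sat σ

/-- Number of atomic subformulas. -/
def Guard.atoms : Guard V → ℕ
  | .lt _ _ => 1
  | .mod _ _ _ _ => 1
  | .and g₁ g₂ => g₁.atoms + g₂.atoms
  | .not g => g.atoms

/-- All constants in the guard are at most `N`. -/
def Guard.constLe (N : ℕ) : Guard V → Prop
  | .lt _ n => n ≤ N
  | .mod _ n m _ => n ≤ N ∧ m ≤ N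
  | .and g₁ g₂ => g₁.constLe N ∧ g₂.constLe N
  | .not g => g.constLe N

/-- The counting DFA for `X < n`. -/
def ltDFA (X : V) (n : ℕ) : DFA' V where
  S := Fin (n + 1)
  step := fun s a => if a = X then (if h : s.1 < n then ⟨s.1 + 1, by omega⟩ else s) else s
  start := ⟨0, by omega⟩
  accept := Finset.univ.filter fun s => s.1 < n

/-- The counting DFA for `X ≡ n mod m`. -/
def modDFA (X : V) (n m : ℕ) (h : n < m) : DFA' V where
  S := Fin m
  step := fun s a => if a = X then ⟨(s.1 + 1) % m, Nat.mod_lt _ (by omega)⟩ else s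
  start := ⟨0, by omega⟩
  accept := {⟨n, h⟩}

/-- Product DFA. -/
def DFA'.inter (B C : DFA' V) : DFA' V where
  S := B.S × C.S
  step := fun s a => (B.step s.1 a, C.step s.2 a)
  start := (B.start, C.start)
  accept := B.accept ×ˢ C.accept

/-- Complement DFA. -/
def DFA'.compl (B : DFA' V) : DFA' V :=
  { B with accept := B.acceptᶜ }

/-- The guard DFA `B_φ`. -/
def Guard.dfa : Guard V → DFA' V
  | .lt X n => ltDFA X n
  | .mod X n m h => modDFA X n m h
  | .and g₁ g₂ => g₁.dfa.inter g₂.dfa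
  | .not g => g.dfa.compl

/-- Loop-free ReDiP programs; distributions are given by weighted automata. -/
inductive ReDiP (V : Type) : Type 1 where
  | setzero : V → ReDiP V
  | incrConst : V → ℕ → ReDiP V
  | incrDist : V → WA V → ReDiP V
  | incrVar : V → V → ReDiP V
  | iid : V → WA V → V → ReDiP V
  | decr : V → ReDiP V
  | choice : ℝ≥0∞ → ReDiP V → ReDiP V → ReDiP V
  | ite : Guard V → ReDiP V → ReDiP V → ReDiP V
  | observe : Guard V → ReDiP V
  | seq : ReDiP V → ReDiP V → ReDiP V

/-- A distribution automaton for variable `x`: mass exactly `1` and supported on `x`. -/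
def distWf (x : V) (D : WA V) : Prop :=
  D.mass = 1 ∧ ∀ σ : V → ℕ, D.behavior σ ≠ 0 → ∀ y : V, y ≠ x → σ y = 0

/-- Well-formedness of a ReDiP program. -/
def ReDiP.wf : ReDiP V → Prop
  | .incrDist x D => distWf x D
  | .iid x D _ => distWf x D
  | .choice p P₁ P₂ => p ≤ 1 ∧ P₁.wf ∧ P₂.wf
  | .ite _ P₁ P₂ => P₁.wf ∧ P₂.wf
  | .seq P₁ P₂ => P₁.wf ∧ P₂.wf
  | _ => True

/-- `P` contains no `iid` statements. -/
def ReDiP.noIid : ReDiP V → Prop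
  | .iid _ _ _ => False
  | .choice _ P₁ P₂ => P₁.noIid ∧ P₂.noIid
  | .ite _ P₁ P₂ => P₁.noIid ∧ P₂.noIid
  | .seq P₁ P₂ => P₁.noIid ∧ P₂.noIid
  | _ => True

/-- Program size. -/
def ReDiP.size : ReDiP V → ℕ
  | .choice _ P₁ P₂ => 1 + P₁.size + P₂.size
  | .ite _ P₁ P₂ => 1 + P₁.size + P₂.size
  | .seq P₁ P₂ => P₁.size + P₂.size
  | _ => 1

/-- The `(n+1)`-state chain of `X`-transitions (Dirac distribution `δ_n` on `X`). -/
noncomputable def chainX (X : V) (n : ℕ) : WA V where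
  Q := Fin (n + 1)
  w := fun i j => if j.1 = i.1 + 1 then 1 else 0
  lab := fun i j => if j.1 = i.1 + 1 then some X else none
  I := fun i => if i = ⟨0, by omega⟩ then 1 else 0
  F := fun i => if i = Fin.last n then 1 else 0

/-- The three-state chain with one `Y`-transition followed by one `X`-transition. -/
noncomputable def chainYX (Y X : V) : WA V where
  Q := Fin 3
  w := fun i j => if j.1 = i.1 + 1 then 1 else 0
  lab := fun i j => if j.1 = i.1 + 1 then (if i.1 = 0 then some Y else some X) else none
  I := fun i => if i = 0 then 1 else 0
  F := fun i => if i = Fin.last 2 then 1 else 0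

/-- The two-state automaton with a single `Y`-transition. -/
noncomputable def singleY (Y : V) : WA V := chainX Y 1

/-- The automata translation of a ReDiP program (Table 2). -/
noncomputable def ReDiP.sem : ReDiP V → WA V → WA V
  | .setzero x, A => A.subst1 x
  | .incrConst x n, A => A.concat (chainX x n)
  | .incrDist _ D, A => A.concat D
  | .incrVar x y, A => A.tsubst y (chainYX y x)
  | .iid _ D y, A => A.tsubst y ((singleY y).concat D)
  | .decr x, A => A.decrA x
  | .choice p P₁ P₂, A => WA.wsum p (1 - p) (P₁.sem A) (P₂.sem A)
  | .ite φ P₁ P₂, A =>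
      WA.wsum 1 1 (P₁.sem (A.prodDFA φ.dfa)) (P₂.sem (A.prodDFA (Guard.not φ).dfa))
  | .observe φ, A => A.prodDFA φ.dfa
  | .seq P₁ P₂, A => P₂.sem (P₁.sem A)

/-- The parameters (distribution automata sizes, constants, guard atoms) of `P` are
bounded by `d`, `N` and `η`, respectively. -/
def ReDiP.boundedBy (d N η : ℕ) : ReDiP V → Prop
  | .setzero _ => True
  | .incrConst _ n => n ≤ N
  | .incrDist _ D => D.size ≤ d
  | .incrVar _ _ => True
  | .iid _ D _ => D.size ≤ d
  | .decr _ => True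
  | .choice _ P₁ P₂ => P₁.boundedBy d N η ∧ P₂.boundedBy d N η
  | .ite φ P₁ P₂ =>
      φ.atoms ≤ η ∧ φ.constLe N ∧ P₁.boundedBy d N η ∧ P₂.boundedBy d N η
  | .observe φ => φ.atoms ≤ η ∧ φ.constLe N
  | .seq P₁ P₂ => P₁.boundedBy d N η ∧ P₂.boundedBy d N η

/-- Configurations of the operational Markov chain. -/
inductive Conf (V : Type) : Type 1 where
  | run : ReDiP V → (V → ℕ) → Conf V
  | term : (V → ℕ) → Conf V
  | err : Conf V

/-- One-step transition probabilities of the operational Markov chain from `⟨P, σ⟩`. -/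
noncomputable def pstep : ReDiP V → (V → ℕ) → Conf V → ℝ≥0∞
  | .setzero x, σ, c => if c = Conf.term (Function.update σ x 0) then 1 else 0
  | .incrConst x n, σ, c => if c = Conf.term (Function.update σ x (σ x + n)) then 1 else 0
  | .incrDist x D, σ, c =>
      ∑' n : ℕ,
        if c = Conf.term (Function.update σ x (σ x + n)) then
          D.behavior (fun y => if y = x then n else 0)
        else 0
  | .incrVar x y, σ, c => if c = Conf.term (Function.update σ x (σ x + σ y)) then 1 else 0
  | .iid _ _ _, _, _ => 0
  | .decr x, σ, c => if c = Conf.term (Function.update σ x (σ x - 1)) then 1 else 0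
  | .choice p P₁ P₂, σ, c =>
      (if c = Conf.run P₁ σ then p else 0) + (if c = Conf.run P₂ σ then 1 - p else 0)
  | .ite φ P₁ P₂, σ, c =>
      if φ.sat σ then (if c = Conf.run P₁ σ then 1 else 0)
      else (if c = Conf.run P₂ σ then 1 else 0)
  | .observe φ, σ, c =>
      if φ.sat σ then (if c = Conf.term σ then 1 else 0)
      else (if c = Conf.err then 1 else 0)
  | .seq P₁ P₂, σ, c =>
      match c with
      | .run Q σ' =>
          (if Q = P₂ then pstep P₁ σ (Conf.term σ') else 0) +
          (match Q with
           | .seq P₁' P₂' => if P₂' = P₂ then pstep P₁ σ (Conf.run P₁' σ') else 0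
           | _ => 0)
      | .term _ => 0
      | .err => pstep P₁ σ Conf.err

/-- Transition probabilities between configurations (terminal and error states are absorbing
with no outgoing transitions). -/
noncomputable def cstep : Conf V → Conf V → ℝ≥0∞
  | .run P σ, c => pstep P σ c
  | _, _ => 0

/-- Initial distribution of the operational Markov chain `M(A, P)`. -/
noncomputable def mcInit (A : WA V) (P : ReDiP V) : Conf V → ℝ≥0∞
  | .run P' σ => if P' = P then A.behavior σ else 0
  | _ => 0

/-- Reachability probability `Pr^{M(A,P)}(◇ t)`: the sum over all finite sequences of
configurations ending at `t` and avoiding `t` before, of the initial weight of the first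
configuration times the product of the transition probabilities. -/
noncomputable def reachProb (A : WA V) (P : ReDiP V) (t : Conf V) : ℝ≥0∞ :=
  ∑' (k : ℕ)
      (p : {p : Fin (k + 1) → Conf V //
            p (Fin.last k) = t ∧ ∀ i : Fin k, p i.castSucc ≠ t}),
    mcInit A P (p.1 0) * ∏ i : Fin k, cstep (p.1 i.castSucc) (p.1 i.succ)

/-
A path of `A^{X--}` stays inside one summand. In `A[X/0]` the paths of nonzero weight are
exactly the `X`-free paths of `A`, which matter only when `σ X = 0`. In the product summand a
path of nonzero weight is determined by its projection `p` to `A`: the `Bool` component is forced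
to be the run of `B_{X>0}` along `p`, and the final weight forces `p` to read `X` at least once.
Only the first `X`-transition of `p` moves the guard from `s₀` to `s₁`, so relabelling it to `ε`
lowers the `X`-count by exactly one. Projection is therefore a weight-preserving bijection onto
the paths of `A` with Parikh image `σ[X ↦ σ X + 1]`.
-/

namespace WA

section Paths

variable {V : Type}

theorem pathWeight_ne_zero_iff {A : WA V} {n : ℕ} {p : Fin (n + 1) → A.Q} :
    A.pathWeight p ≠ 0 ↔ A.I (p 0) ≠ 0 ∧ (∀ i : Fin n, A.w (p i.castSucc) (p i.succ) ≠ 0) ∧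
      A.F (p (Fin.last n)) ≠ 0 := by
  simp [pathWeight, Finset.prod_ne_zero_iff, and_assoc]

section DisjointUnion

variable {A₁ A₂ : WA V} {s t : ℝ≥0∞}

theorem isLeft_eq_of_wsum_w_ne_zero {a b : A₁.Q ⊕ A₂.Q} (h : (wsum s t A₁ A₂).w a b ≠ 0) :
    a.isLeft = b.isLeft := by
  cases a <;> cases b <;> simp_all [wsum]

theorem mem_range_of_wsum_pathWeight_ne_zero {n : ℕ} {q : Fin (n + 1) → A₁.Q ⊕ A₂.Q}
    (h : (wsum s t A₁ A₂).pathWeight q ≠ 0) :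
    q ∈ Set.range (Sum.elim (Sum.inl ∘ ·) (Sum.inr ∘ ·)) := by
  obtain ⟨-, hw, -⟩ := pathWeight_ne_zero_iff.1 h
  have hside : ∀ i, (q i).isLeft = (q 0).isLeft :=
    Fin.induction rfl fun i ih => (isLeft_eq_of_wsum_w_ne_zero (hw i)).symm.trans ih
  cases h0 : (q 0).isLeft
  · choose p hp using fun i => Sum.isRight_iff.1 (Sum.isLeft_eq_false.1 ((hside i).trans h0))
    exact ⟨Sum.inr p, funext fun i => (hp i).symm⟩
  · choose p hp using fun i => Sum.isLeft_iff.1 ((hside i).trans h0)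
    exact ⟨Sum.inl p, funext fun i => (hp i).symm⟩

theorem pathWeight_wsum_inl {n : ℕ} (p : Fin (n + 1) → A₁.Q) :
    (wsum s t A₁ A₂).pathWeight (Sum.inl ∘ p) = s * A₁.pathWeight p := by
  simp [pathWeight, wsum, mul_assoc]

theorem pathWeight_wsum_inr {n : ℕ} (p : Fin (n + 1) → A₂.Q) :
    (wsum s t A₁ A₂).pathWeight (Sum.inr ∘ p) = t * A₂.pathWeight p := by
  simp [pathWeight, wsum, mul_assoc]

end DisjointUnion

section Runs

variable (A : WA V) (B : DFA' V)

def runDFA {n : ℕ} (p : Fin (n + 1) → A.Q) : Fin (n + 1) → B.S :=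
  Fin.induction B.start fun i s => (A.lab (p i.castSucc) (p i.succ)).elim s (B.step s)

def liftRun {n : ℕ} (p : Fin (n + 1) → A.Q) : Fin (n + 1) → A.Q × B.S :=
  fun i => (p i, A.runDFA B p i)

variable {A B}

@[simp]
theorem runDFA_zero {n : ℕ} (p : Fin (n + 1) → A.Q) : A.runDFA B p 0 = B.start :=
  rfl

theorem runDFA_succ {n : ℕ} (p : Fin (n + 1) → A.Q) (i : Fin n) :
    A.runDFA B p i.succ =
      (A.lab (p i.castSucc) (p i.succ)).elim (A.runDFA B p i.castSucc)
        (B.step (A.runDFA B p i.castSucc)) :=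
  Fin.induction_succ _ _ i

theorem liftRun_injective (n : ℕ) : Function.Injective (A.liftRun B (n := n)) :=
  fun _ _ h => funext fun i => congrArg Prod.fst (congrFun h i)

theorem prodDFA_w (a b : A.Q × B.S) :
    (A.prodDFA B).w a b =
      if b.2 = (A.lab a.1 b.1).elim a.2 (B.step a.2) then A.w a.1 b.1 else 0 := by
  simp only [prodDFA]
  split <;> simp_all

theorem prodDFA_pathWeight_liftRun {n : ℕ} (p : Fin (n + 1) → A.Q) :
    (A.prodDFA B).pathWeight (A.liftRun B p) =
      if A.runDFA B p (Fin.last n) ∈ B.accept then A.pathWeight p else 0 := by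
  have hw : ∀ i : Fin n, (A.prodDFA B).w (A.liftRun B p i.castSucc) (A.liftRun B p i.succ) =
      A.w (p i.castSucc) (p i.succ) := fun i =>
    (prodDFA_w _ _).trans (if_pos (runDFA_succ p i))
  unfold pathWeight
  simp only [hw]
  simp only [prodDFA, liftRun, runDFA_zero, if_true]
  split_ifs <;> simp

theorem eq_liftRun_of_prodDFA_pathWeight_ne_zero {n : ℕ} {q : Fin (n + 1) → A.Q × B.S}
    (h : (A.prodDFA B).pathWeight q ≠ 0) : q = A.liftRun B (fun i => (q i).1) := by
  obtain ⟨hI, hw, -⟩ := pathWeight_ne_zero_iff.1 h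
  funext i
  refine Prod.ext rfl ?_
  induction i using Fin.induction with
  | zero => exact (ite_ne_right_iff.1 hI).1
  | succ i ih =>
    have := hw i
    rw [prodDFA_w, ite_ne_right_iff] at this
    rw [this.1, ih]
    exact (runDFA_succ (fun j => (q j).1) i).symm

end Runs

end Paths

section Behavior

variable {V : Type} [DecidableEq V]

noncomputable def lengthBehavior (A : WA V) (n : ℕ) (σ : V → ℕ) : ℝ≥0∞ :=
  ∑ p : Fin (n + 1) → A.Q, if A.parikh p = σ then A.pathWeight p else 0

theorem behavior_eq_tsum_lengthBehavior (A : WA V) (σ : V → ℕ) :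
    A.behavior σ = ∑' n, A.lengthBehavior n σ := by
  refine tsum_congr fun n => ?_
  refine (tsum_subtype {p | A.parikh p = σ} A.pathWeight).trans ?_
  simp only [tsum_fintype, lengthBehavior, Set.indicator_apply, Set.mem_ofPred_eq]

theorem parikh_eq_zero_iff {A : WA V} {n : ℕ} {p : Fin (n + 1) → A.Q} {X : V} :
    A.parikh p X = 0 ↔ ∀ i : Fin n, A.lab (p i.castSucc) (p i.succ) ≠ some X := by
  simp [parikh, Finset.card_eq_zero, Finset.filter_eq_empty_iff]

section DisjointUnion

variable {A₁ A₂ : WA V} {s t : ℝ≥0∞}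

theorem parikh_wsum_inl {n : ℕ} (p : Fin (n + 1) → A₁.Q) :
    (wsum s t A₁ A₂).parikh (Sum.inl ∘ p) = A₁.parikh p :=
  rfl

theorem parikh_wsum_inr {n : ℕ} (p : Fin (n + 1) → A₂.Q) :
    (wsum s t A₁ A₂).parikh (Sum.inr ∘ p) = A₂.parikh p :=
  rfl

theorem lengthBehavior_wsum (n : ℕ) (σ : V → ℕ) :
    (wsum s t A₁ A₂).lengthBehavior n σ =
      s * A₁.lengthBehavior n σ + t * A₂.lengthBehavior n σ := by
  let e : (Fin (n + 1) → A₁.Q) ⊕ (Fin (n + 1) → A₂.Q) →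
      Fin (n + 1) → (wsum s t A₁ A₂).Q :=
    Sum.elim (Sum.inl ∘ ·) (Sum.inr ∘ ·)
  have he : Function.Injective e :=
    Sum.inl_injective.comp_left.sumElim Sum.inr_injective.comp_left
      fun _ _ h => Sum.inl_ne_inr (congrFun h 0)
  rw [lengthBehavior, ← Fintype.sum_of_injective e he _ _ (fun q hq => ?_) fun _ => rfl,
    Fintype.sum_sum_type]
  · simp only [e, Sum.elim_inl, Sum.elim_inr, pathWeight_wsum_inl, pathWeight_wsum_inr,
      parikh_wsum_inl, parikh_wsum_inr, lengthBehavior, Finset.mul_sum, mul_ite, mul_zero]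
  · by_contra hne
    exact hq (mem_range_of_wsum_pathWeight_ne_zero (ite_ne_right_iff.1 hne).2)

end DisjointUnion

theorem behavior_wsum (s t : ℝ≥0∞) (A₁ A₂ : WA V) (σ : V → ℕ) :
    (wsum s t A₁ A₂).behavior σ = s * A₁.behavior σ + t * A₂.behavior σ := by
  simp only [behavior_eq_tsum_lengthBehavior, lengthBehavior_wsum, ENNReal.tsum_add,
    ENNReal.tsum_mul_left]

theorem pathWeight_subst0 (A : WA V) (X : V) {n : ℕ} (p : Fin (n + 1) → A.Q) :
    (A.subst0 X).pathWeight p = if A.parikh p X = 0 then A.pathWeight p else 0 := by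
  split_ifs with hX
  · have hw : ∀ i : Fin n,
        (A.subst0 X).w (p i.castSucc) (p i.succ) = A.w (p i.castSucc) (p i.succ) :=
      fun i => if_neg (parikh_eq_zero_iff.1 hX i)
    simp only [pathWeight, hw]
    rfl
  · obtain ⟨i, hi⟩ : ∃ i : Fin n, A.lab (p i.castSucc) (p i.succ) = some X := by
      simpa [parikh_eq_zero_iff] using hX
    have hw : (A.subst0 X).w (p i.castSucc) (p i.succ) = 0 := if_pos hi
    unfold pathWeight
    rw [Finset.prod_eq_zero (Finset.mem_univ i) hw, mul_zero, zero_mul]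

theorem behavior_subst0 (A : WA V) (X : V) (σ : V → ℕ) :
    (A.subst0 X).behavior σ = if σ X = 0 then A.behavior σ else 0 := by
  unfold behavior
  split_ifs with hσ
  · refine tsum_congr fun n => tsum_congr fun p => ?_
    exact (pathWeight_subst0 A X p.1).trans (if_pos ((congrFun p.2 X).trans hσ))
  · refine ENNReal.tsum_eq_zero.2 fun n => ENNReal.tsum_eq_zero.2 fun p => ?_
    exact (pathWeight_subst0 A X p.1).trans (if_neg ((congrFun p.2 X).trans_ne hσ))

theorem runDFA_BXpos_eq_true_iff (A : WA V) (X : V) {n : ℕ} (p : Fin (n + 1) → A.Q)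
    (i : Fin (n + 1)) :
    A.runDFA (BXpos X) p i = true ↔
      ∃ j : Fin n, j.castSucc < i ∧ A.lab (p j.castSucc) (p j.succ) = some X := by
  induction i using Fin.induction with
  | zero => simp [BXpos]
  | succ i ih =>
    simp only [Fin.castSucc_lt_castSucc_iff] at ih
    simp only [Fin.castSucc_lt_succ_iff, le_iff_lt_or_eq, or_and_right, exists_or,
      exists_eq_left, ← ih, runDFA_succ]
    rcases A.lab (p i.castSucc) (p i.succ) with _ | Y
    · simp
    · by_cases hY : Y = X <;> simp [BXpos, hY]

theorem runDFA_BXpos_last_mem_accept (A : WA V) (X : V) {n : ℕ} (p : Fin (n + 1) → A.Q) :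
    A.runDFA (BXpos X) p (Fin.last n) ∈ (BXpos X).accept ↔ A.parikh p X ≠ 0 := by
  refine Finset.mem_singleton.trans ((runDFA_BXpos_eq_true_iff A X p _).trans ?_)
  simp [Fin.castSucc_lt_last, parikh_eq_zero_iff]

noncomputable def decrLeft (A : WA V) (X : V) : WA V :=
  { A.prodDFA (BXpos X) with
    lab := fun a b =>
      if a.2 = false ∧ b.2 = true ∧ (A.prodDFA (BXpos X)).lab a b = some X then none
      else (A.prodDFA (BXpos X)).lab a b }

theorem decrA_eq_wsum (A : WA V) (X : V) :
    A.decrA X = wsum 1 1 (A.decrLeft X) (A.subst0 X) :=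
  rfl

-- Stated over `(A.decrLeft X).Q` so that the `Decidable` instances elaborate as in `WA.decrA`.
theorem decrLeft_lab (A : WA V) (X : V) (a b : (A.decrLeft X).Q) :
    (A.decrLeft X).lab a b =
      if a.2 = false ∧ b.2 = true ∧ A.lab a.1 b.1 = some X then none else A.lab a.1 b.1 :=
  rfl

theorem decrLeft_lab_eq_some (A : WA V) (X Y : V) (a b : (A.decrLeft X).Q) :
    (A.decrLeft X).lab a b = some Y ↔
      A.lab a.1 b.1 = some Y ∧ ¬(a.2 = false ∧ b.2 = true ∧ Y = X) := by
  rw [decrLeft_lab]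
  split_ifs with h
  · simp only [false_iff, not_and]
    intro hY hnot
    exact hnot h.1 h.2.1 (Option.some_injective _ (hY.symm.trans h.2.2))
  · refine ⟨fun hY => ⟨hY, fun ⟨ha, hb, hYX⟩ => h ⟨ha, hb, hYX ▸ hY⟩⟩, And.left⟩

theorem decrLeft_lab_liftRun_eq_some (A : WA V) (X Y : V) {n : ℕ} (p : Fin (n + 1) → A.Q)
    (i : Fin n) :
    (A.decrLeft X).lab (A.liftRun (BXpos X) p i.castSucc) (A.liftRun (BXpos X) p i.succ) =
        some Y ↔
      A.lab (p i.castSucc) (p i.succ) = some Y ∧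
        (Y = X → A.runDFA (BXpos X) p i.castSucc = true) := by
  refine (decrLeft_lab_eq_some A X Y _ _).trans (and_congr_right fun hY => ?_)
  dsimp only [liftRun] at hY ⊢
  rw [runDFA_succ, hY]
  by_cases hYX : Y = X <;> simp [BXpos, hYX]

theorem parikh_decrLeft_liftRun_of_ne (A : WA V) {X Y : V} (hY : Y ≠ X) {n : ℕ}
    (p : Fin (n + 1) → A.Q) :
    (A.decrLeft X).parikh (A.liftRun (BXpos X) p) Y = A.parikh p Y := by
  simp only [parikh, decrLeft_lab_liftRun_eq_some, hY, false_imp_iff, and_true]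

theorem parikh_decrLeft_liftRun_add_one (A : WA V) (X : V) {n : ℕ} (p : Fin (n + 1) → A.Q)
    (h : A.parikh p X ≠ 0) :
    (A.decrLeft X).parikh (A.liftRun (BXpos X) p) X + 1 = A.parikh p X := by
  set S := Finset.univ.filter fun j : Fin n => A.lab (p j.castSucc) (p j.succ) = some X
  have hS : S.Nonempty := Finset.card_pos.1 (Nat.pos_of_ne_zero h)
  have hmem : ∀ {j}, j ∈ S ↔ A.lab (p j.castSucc) (p j.succ) = some X := by simp [S]
  have hfilter : (Finset.univ.filter fun j : Fin n => (A.decrLeft X).lab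
      (A.liftRun (BXpos X) p j.castSucc) (A.liftRun (BXpos X) p j.succ) = some X) =
      S.erase (S.min' hS) := by
    ext j
    simp only [Finset.mem_filter, Finset.mem_univ, true_and, Finset.mem_erase, hmem,
      decrLeft_lab_liftRun_eq_some, runDFA_BXpos_eq_true_iff, Fin.castSucc_lt_castSucc_iff,
      forall_const]
    constructor
    · rintro ⟨hj, k, hkj, hk⟩
      exact ⟨((S.min'_le k (hmem.2 hk)).trans_lt hkj).ne', hj⟩
    · rintro ⟨hne, hj⟩
      exact ⟨hj, S.min' hS, (S.min'_le j (hmem.2 hj)).lt_of_ne' hne, hmem.1 (S.min'_mem hS)⟩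
  change (Finset.univ.filter _).card + 1 = S.card
  rw [hfilter, Finset.card_erase_add_one (S.min'_mem hS)]

theorem parikh_decrLeft_liftRun_eq_iff (A : WA V) (X : V) {n : ℕ} (p : Fin (n + 1) → A.Q)
    (h : A.parikh p X ≠ 0) (σ : V → ℕ) :
    (A.decrLeft X).parikh (A.liftRun (BXpos X) p) = σ ↔
      A.parikh p = Function.update σ X (σ X + 1) := by
  have hX := parikh_decrLeft_liftRun_add_one A X p h
  constructor
  · rintro rfl
    funext Y
    rcases eq_or_ne Y X with rfl | hY
    · rw [Function.update_self, hX]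
    · rw [Function.update_of_ne hY, parikh_decrLeft_liftRun_of_ne A hY]
  · intro hσ
    funext Y
    rcases eq_or_ne Y X with rfl | hY
    · have := congrFun hσ Y
      rw [Function.update_self, ← hX] at this
      omega
    · rw [parikh_decrLeft_liftRun_of_ne A hY, hσ, Function.update_of_ne hY]

theorem lengthBehavior_decrLeft (A : WA V) (X : V) (n : ℕ) (σ : V → ℕ) :
    (A.decrLeft X).lengthBehavior n σ = A.lengthBehavior n (Function.update σ X (σ X + 1)) := by
  refine (Fintype.sum_of_injective (A.liftRun (BXpos X)) (liftRun_injective n) _ _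
    (fun q hq => ?_) fun p => ?_).symm
  · by_contra hne
    exact hq ⟨_, (eq_liftRun_of_prodDFA_pathWeight_ne_zero (ite_ne_right_iff.1 hne).2).symm⟩
  · change _ = ite _ ((A.prodDFA (BXpos X)).pathWeight (A.liftRun (BXpos X) p)) 0
    rw [prodDFA_pathWeight_liftRun]
    by_cases hX : A.parikh p X = 0
    · have hne : A.parikh p ≠ Function.update σ X (σ X + 1) := fun h => by
        simpa [hX] using congrFun h X
      rw [if_neg hne, if_neg (mt (runDFA_BXpos_last_mem_accept A X p).1 (not_not.2 hX)),
        ite_self]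
    · rw [if_pos ((runDFA_BXpos_last_mem_accept A X p).2 hX),
        parikh_decrLeft_liftRun_eq_iff A X p hX]

theorem behavior_decrLeft (A : WA V) (X : V) (σ : V → ℕ) :
    (A.decrLeft X).behavior σ = A.behavior (Function.update σ X (σ X + 1)) := by
  simp only [behavior_eq_tsum_lengthBehavior, lengthBehavior_decrLeft]

end Behavior

end WA

theorem stmt_8_general (V : Type) [DecidableEq V] (A : WA V) (X : V) (σ : V → ℕ) :
    (A.decrA X).behavior σ =
      A.behavior (Function.update σ X (σ X + 1)) +
        (if σ X = 0 then A.behavior σ else 0) := by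
  rw [WA.decrA_eq_wsum, WA.behavior_wsum, WA.behavior_decrLeft, WA.behavior_subst0, one_mul,
    one_mul]

/-- the decrement construction implements truncated decrement of `X`. -/
theorem stmt_8 (V : Type) [Fintype V] [DecidableEq V] (A : WA V) (X : V) (σ : V → ℕ) :
    (A.decrA X).behavior σ =
      A.behavior (Function.update σ X (σ X + 1)) +
        (if σ X = 0 then A.behavior σ else 0) :=
  stmt_8_general V A X σ
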